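/- Let k >= 4 and let H be a 3-uniform hypergraph on n vertices with minimum positive co-degree strictly greater than ((k-1)/(2k-1))n. If H contains a copy of J_k, then H contains at least one of K_4^3, F_{3,2}, or J_{k+1}. -/

import Mathlib

/-!
Let `a` be the apex and `u₁, …, u_k` the leaves of the copy of `J_k`. If `z` lies in the link of
`a u_i` and in the link of `u_j u_l` (with `i, j, l` distinct), then `a u_i u_j, a u_i u_l, a u_i z,
u_j u_l z` form an `F_{3,2}`; so without `F_{3,2}` these links are disjoint. Every link has more
than `(k-1)n/(2k-1)` vertices, so intersecting the links of `a u₁, …, a u_k` one at a time loses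
fewer than `n/(2k-1)` vertices per step: the running intersection and the new link both avoid
the link of two other leaves (which exist as `k ≥ 4`). After `k - 1` steps a vertex `z` remains,
and adding it as a new leaf turns `J_k` into `J_{k+1}`.
-/

open Finset

namespace Finset

variable {α : Type*} [DecidableEq α]

theorem ne_of_card_eq_three {x y z : α} (h : #{x, y, z} = 3) : x ≠ y ∧ x ≠ z ∧ y ≠ z := by
  refine ⟨?_, ?_, ?_⟩ <;> rintro rfl <;> simp at h <;> exact absurd (h ▸ card_le_two) (by decide)

theorem exists_eq_triple_of_card_eq_three {s : Finset α} {x y : α} (hs : #s = 3) (hx : x ∈ s)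
    (hy : y ∈ s) (hxy : x ≠ y) : ∃ z, s = {x, y, z} := by
  have hy' : y ∈ s.erase x := mem_erase.2 ⟨hxy.symm, hy⟩
  obtain ⟨z, hz⟩ : ∃ z, (s.erase x).erase y = {z} := by
    rw [← card_eq_one, card_erase_of_mem hy', card_erase_of_mem hx, hs]
  exact ⟨z, by rw [← insert_erase hx, ← insert_erase hy', hz]⟩

theorem exists_ne_of_card_add_two_le [Fintype α] {s : Finset α} (h : #s + 2 ≤ Fintype.card α) :
    ∃ p ∉ s, ∃ q ∉ s, p ≠ q := by
  have : 1 < #sᶜ := by rw [card_compl]; omega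
  obtain ⟨p, hp, q, hq, hpq⟩ := one_lt_card.1 this
  exact ⟨p, mem_compl.1 hp, q, mem_compl.1 hq, hpq⟩

theorem card_add_card_add_card_le [Fintype α] {s t u : Finset α} (h : Disjoint (s ∪ t) u) :
    #s + #t + #u ≤ Fintype.card α + #(s ∩ t) := by
  have := card_union_add_card_inter s t
  have := card_le_univ (s ∪ t ∪ u)
  rw [card_union_of_disjoint h] at this
  omega

/-- Each further set costs at most `|α| - a - b` elements of the running intersection, since the
intersection so far and the new set both avoid a set of size greater than `b`. -/
theorem sub_mul_lt_card_inter_inf [Fintype α] {ι : Type*} [DecidableEq ι] (A : ι → Finset α)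
    {i₀ : ι} {a b : ℝ} (h₀ : a < #(A i₀)) (s : Finset ι) (hA : ∀ i ∈ s, a < #(A i))
    (hU : ∀ i ∈ s, ∃ U, Disjoint (A i₀ ∪ A i) U ∧ b < #U) :
    a - #s * (Fintype.card α - a - b) < #(A i₀ ∩ s.inf A) := by
  induction s using Finset.induction_on with
  | empty => simpa using h₀
  | insert j s hj ih =>
    have ih := ih (fun i hi ↦ hA i (mem_insert_of_mem hi)) fun i hi ↦ hU i (mem_insert_of_mem hi)
    obtain ⟨U, hdisj, hbU⟩ := hU j (mem_insert_self j s)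
    have hsub : A j ∪ (A i₀ ∩ s.inf A) ⊆ A i₀ ∪ A j := by
      rw [union_comm]; exact union_subset_union inter_subset_left subset_rfl
    have hcount := card_add_card_add_card_le (disjoint_of_subset_left hsub hdisj)
    have hAj := hA j (mem_insert_self j s)
    have hcount' := (Nat.cast_le (α := ℝ)).2 hcount
    rw [inf_insert, inf_eq_inter, card_insert_of_notMem hj, inter_left_comm]
    push_cast at hcount' ⊢
    linarith

end Finset

section Hypergraph

variable {α : Type*} [DecidableEq α] {H : Finset (Finset α)}

variable (H) in
/-- `v` embeds `J_m`: `v 0` is the apex and `v 1, …, v m` are the leaves. -/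
def IsJCopy {m : ℕ} (v : Fin (m + 1) → α) : Prop :=
  Function.Injective v ∧ ∀ i j : Fin (m + 1), 0 < i → i < j → ({v 0, v i, v j} : Finset α) ∈ H

namespace IsJCopy

variable {m : ℕ} {v : Fin (m + 1) → α}

theorem mem_of_ne (hv : IsJCopy H v) {i j : Fin (m + 1)} (hi : i ≠ 0) (hj : j ≠ 0) (hij : i ≠ j) :
    ({v 0, v i, v j} : Finset α) ∈ H := by
  rcases hij.lt_or_gt with hij | hji
  · exact hv.2 i j (Fin.pos_iff_ne_zero.2 hi) hij
  · rw [pair_comm]; exact hv.2 j i (Fin.pos_iff_ne_zero.2 hj) hji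

theorem snoc (hv : IsJCopy H v) {z : α} (hz : z ∉ Set.range v)
    (hlink : ∀ i ≠ 0, ({v 0, v i, z} : Finset α) ∈ H) : IsJCopy H (Fin.snoc v z) := by
  refine ⟨Fin.snoc_injective_of_injective hv.1 hz, fun i j hi hij ↦ ?_⟩
  obtain ⟨i, rfl⟩ := Fin.exists_castSucc_eq.2 (hij.trans_le (Fin.le_last j)).ne
  have hi' : i ≠ 0 := by rintro rfl; simp at hi
  induction j using Fin.lastCases with
  | last =>
    rw [← Fin.castSucc_zero, Fin.snoc_castSucc, Fin.snoc_castSucc, Fin.snoc_last]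
    exact hlink i hi'
  | cast j =>
    rw [← Fin.castSucc_zero, Fin.snoc_castSucc, Fin.snoc_castSucc, Fin.snoc_castSucc]
    exact hv.mem_of_ne hi' (by rintro rfl; simp at hij)
      (Fin.castSucc_lt_castSucc_iff.1 hij).ne

end IsJCopy

variable [Fintype α]

variable (H) in
def link (x y : α) : Finset α := {z | ({x, y, z} : Finset α) ∈ H}

@[simp]
theorem mem_link {x y z : α} : z ∈ link H x y ↔ ({x, y, z} : Finset α) ∈ H := by
  simp [link]

theorem card_filter_mem_le_card_link (huniform : ∀ e ∈ H, #e = 3) {x y : α} (hxy : x ≠ y) :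
    #{e ∈ H | x ∈ e ∧ y ∈ e} ≤ #(link H x y) := by
  calc #{e ∈ H | x ∈ e ∧ y ∈ e}
      _ ≤ #((link H x y).image fun z ↦ ({x, y, z} : Finset α)) := by
        refine card_le_card fun e he ↦ ?_
        obtain ⟨he, hx, hy⟩ := mem_filter.1 he
        obtain ⟨z, rfl⟩ := exists_eq_triple_of_card_eq_three (huniform e he) hx hy hxy
        exact mem_image_of_mem _ (mem_link.2 he)
      _ ≤ #(link H x y) := card_image_le

variable (H) in
def HasF32Copy : Prop :=
  ∃ p q s t u : α, #{p, q, s, t, u} = 5 ∧ ({p, q, s} : Finset α) ∈ H ∧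
    ({p, q, t} : Finset α) ∈ H ∧ ({p, q, u} : Finset α) ∈ H ∧ ({s, t, u} : Finset α) ∈ H

theorem hasF32Copy_of_mem_link (huniform : ∀ e ∈ H, #e = 3) {a b c d z : α}
    (habc : ({a, b, c} : Finset α) ∈ H) (habd : ({a, b, d} : Finset α) ∈ H)
    (hab : z ∈ link H a b) (hcd : z ∈ link H c d) : HasF32Copy H := by
  rw [mem_link] at hab hcd
  obtain ⟨h₁, h₂, h₃⟩ := ne_of_card_eq_three (huniform _ habc)
  obtain ⟨-, h₄, h₅⟩ := ne_of_card_eq_three (huniform _ habd)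
  obtain ⟨-, h₆, h₇⟩ := ne_of_card_eq_three (huniform _ hab)
  obtain ⟨h₈, h₉, h₁₀⟩ := ne_of_card_eq_three (huniform _ hcd)
  exact ⟨a, b, c, d, z, by simp [card_insert_of_notMem, *], habc, habd, hab, hcd⟩

namespace IsJCopy

variable {m : ℕ} {v : Fin (m + 1) → α}

theorem disjoint_link (huniform : ∀ e ∈ H, #e = 3) (hF : ¬ HasF32Copy H) (hv : IsJCopy H v)
    {i j l : Fin (m + 1)} (hi : i ≠ 0) (hj : j ≠ 0) (hl : l ≠ 0) (hij : i ≠ j) (hil : i ≠ l) :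
    Disjoint (link H (v 0) (v i)) (link H (v j) (v l)) :=
  disjoint_left.2 fun _ hz hz' ↦
    hF (hasF32Copy_of_mem_link huniform (hv.mem_of_ne hi hj hij) (hv.mem_of_ne hi hl hil) hz hz')

theorem lt_card_link_apex (hm : 2 ≤ m) (hv : IsJCopy H v) {a : ℝ}
    (hlink : ∀ x y, x ≠ y → (∃ e ∈ H, x ∈ e ∧ y ∈ e) → a < #(link H x y))
    {i : Fin (m + 1)} (hi : i ≠ 0) : a < #(link H (v 0) (v i)) := by
  obtain ⟨j, -, hj⟩ := exists_mem_notMem_of_card_lt_card (s := {0, i}) (t := univ)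
    (by rw [card_univ, Fintype.card_fin]; exact card_le_two.trans_lt (by omega))
  simp only [mem_insert, mem_singleton, not_or] at hj
  exact hlink _ _ (hv.1.ne hi.symm) ⟨_, hv.mem_of_ne hi hj.1 (Ne.symm hj.2), by simp, by simp⟩

/-- `U` is the link of two further leaves, which exist as `m ≥ 4`. -/
theorem exists_disjoint_link_apex (huniform : ∀ e ∈ H, #e = 3) (hF : ¬ HasF32Copy H)
    (hm : 4 ≤ m) (hv : IsJCopy H v) {a : ℝ}
    (hlink : ∀ x y, x ≠ y → (∃ e ∈ H, x ∈ e ∧ y ∈ e) → a < #(link H x y))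
    {i j : Fin (m + 1)} (hi : i ≠ 0) (hj : j ≠ 0) :
    ∃ U, Disjoint (link H (v 0) (v i) ∪ link H (v 0) (v j)) U ∧ a < #U := by
  obtain ⟨p, hp, q, hq, hpq⟩ := exists_ne_of_card_add_two_le (s := {0, i, j})
    (by rw [Fintype.card_fin]; exact (Nat.add_le_add_right card_le_three 2).trans (by omega))
  simp only [mem_insert, mem_singleton, not_or] at hp hq
  refine ⟨link H (v p) (v q), disjoint_union_left.2 ⟨?_, ?_⟩,
    hlink _ _ (hv.1.ne hpq) ⟨_, hv.mem_of_ne hp.1 hq.1 hpq, by simp, by simp⟩⟩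
  · exact hv.disjoint_link huniform hF hi hp.1 hq.1 (Ne.symm hp.2.1) (Ne.symm hq.2.1)
  · exact hv.disjoint_link huniform hF hj hp.1 hq.1 (Ne.symm hp.2.2) (Ne.symm hq.2.2)

theorem exists_extension (huniform : ∀ e ∈ H, #e = 3) (hF : ¬ HasF32Copy H) (hm : 4 ≤ m)
    (hv : IsJCopy H v) {a : ℝ}
    (hlink : ∀ x y, x ≠ y → (∃ e ∈ H, x ∈ e ∧ y ∈ e) → a < #(link H x y))
    (ha : (m - 1) * Fintype.card α ≤ (2 * m - 1) * a) :
    ∃ z ∉ Set.range v, ∀ i ≠ 0, ({v 0, v i, z} : Finset α) ∈ H := by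
  have h10 : (1 : Fin (m + 1)) ≠ 0 := by simp [Fin.ext_iff]; omega
  set s : Finset (Fin (m + 1)) := univ \ {0, 1} with hs_def
  have hs : ∀ i ∈ s, i ≠ 0 ∧ i ≠ 1 := by simp [s]
  have hcount := sub_mul_lt_card_inter_inf (fun i ↦ link H (v 0) (v i))
    (hv.lt_card_link_apex (by omega) hlink h10) s
    (fun i hi ↦ hv.lt_card_link_apex (by omega) hlink (hs i hi).1)
    (fun i hi ↦ hv.exists_disjoint_link_apex huniform hF hm hlink h10 (hs i hi).1)
  have hs_card : (#s : ℝ) = m - 1 := by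
    rw [hs_def, card_univ_sdiff, card_pair h10.symm, Fintype.card_fin, Nat.cast_sub (by omega)]
    push_cast
    ring
  obtain ⟨z, hz⟩ : (link H (v 0) (v 1) ∩ s.inf fun i ↦ link H (v 0) (v i)).Nonempty := by
    rw [← card_pos, ← Nat.cast_pos (α := ℝ)]
    rw [hs_card] at hcount
    linarith
  rw [mem_inter, mem_inf] at hz
  have hzlink : ∀ i ≠ 0, ({v 0, v i, z} : Finset α) ∈ H := fun i hi ↦ by
    by_cases hi1 : i = 1
    · exact hi1 ▸ mem_link.1 hz.1
    · exact mem_link.1 (hz.2 i (by simp [s, hi, hi1]))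
  refine ⟨z, ?_, hzlink⟩
  rintro ⟨i, rfl⟩
  by_cases hi : i = 0
  · exact (ne_of_card_eq_three (huniform _ (hzlink 1 h10))).2.1 (hi ▸ rfl)
  · exact (ne_of_card_eq_three (huniform _ (hzlink i hi))).2.2 rfl

end IsJCopy

end Hypergraph

theorem stmt_3 (k n : ℕ) (hk : 4 ≤ k) (H : Finset (Finset (Fin n)))
    (huniform : ∀ e ∈ H, e.card = 3)
    (hcodeg : ∀ x y : Fin n, x ≠ y → (∃ e ∈ H, x ∈ e ∧ y ∈ e) →
      (((k : ℝ) - 1) / (2 * (k : ℝ) - 1)) * n <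
        ((H.filter (fun e => x ∈ e ∧ y ∈ e)).card : ℝ))
    (hJk : ∃ v : Fin (k + 1) → Fin n, Function.Injective v ∧
      ∀ i j : Fin (k + 1), 0 < i → i < j → ({v 0, v i, v j} : Finset (Fin n)) ∈ H) :
    -- K_4^3
    (∃ p q s t : Fin n, ({p, q, s, t} : Finset (Fin n)).card = 4 ∧
      ({p, q, s} : Finset (Fin n)) ∈ H ∧ ({p, q, t} : Finset (Fin n)) ∈ H ∧
      ({p, s, t} : Finset (Fin n)) ∈ H ∧ ({q, s, t} : Finset (Fin n)) ∈ H) ∨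
    -- F_{3,2}
    (∃ p q s t u : Fin n, ({p, q, s, t, u} : Finset (Fin n)).card = 5 ∧
      ({p, q, s} : Finset (Fin n)) ∈ H ∧ ({p, q, t} : Finset (Fin n)) ∈ H ∧
      ({p, q, u} : Finset (Fin n)) ∈ H ∧ ({s, t, u} : Finset (Fin n)) ∈ H) ∨
    -- J_{k+1}
    (∃ v : Fin (k + 2) → Fin n, Function.Injective v ∧
      ∀ i j : Fin (k + 2), 0 < i → i < j → ({v 0, v i, v j} : Finset (Fin n)) ∈ H) := by
  refine Or.inr (or_iff_not_imp_left.2 fun hF ↦ ?_)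
  obtain ⟨v, hv⟩ : ∃ v, IsJCopy H v := hJk
  have hlink : ∀ x y, x ≠ y → (∃ e ∈ H, x ∈ e ∧ y ∈ e) →
      ((k : ℝ) - 1) / (2 * k - 1) * n < #(link H x y) := fun x y hxy he ↦
    (hcodeg x y hxy he).trans_le (by exact_mod_cast card_filter_mem_le_card_link huniform hxy)
  have hk' : (0 : ℝ) < 2 * k - 1 := by
    have : (4 : ℝ) ≤ k := by exact_mod_cast hk
    linarith
  obtain ⟨z, hzv, hz⟩ := hv.exists_extension huniform hF hk hlink
    (by rw [Fintype.card_fin, div_mul_eq_mul_div, mul_div_cancel₀ _ hk'.ne'])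
  exact ⟨_, hv.snoc hzv hz⟩
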